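/- arXiv:nlin/0409040 — 3 statements merged into one kernel-verified Lean document; each statement's English description precedes it below -/
import Mathlib

section
/- Let R : ℝ × ℝ → ℝ³, (σ,t) ↦ R(σ,t), be a smooth family of curves with nowhere-vanishing tangent vector R_σ = ∂_σ R, and for each fixed time t let t, n, b, κ, τ denote the Frenet data of the curve σ ↦ R(σ,t) (with ∂_s = |R_σ|⁻¹ ∂_σ the arclength derivative), assuming κ > 0 everywhere. Suppose the curve evolves with velocity in the normal–binormal plane: ∂_t R = g n + h b for smooth scalar functions g(σ,t), h(σ,t). Then the local stretching factor satisfies ∂_t |R_σ| = −g κ |R_σ|. Consequently, the arclength function s(σ,t) = ∫^σ |R_{σ'}(σ',t)| dσ' satisfies ∂s/∂t = −∫^s gκ ds'. -/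
noncomputable section

open Real

/-- Euclidean 3-space. -/
abbrev E3 : Type := EuclideanSpace ℝ (Fin 3)

/-- The vector cross product on `ℝ³`. -/
def cross3 (u v : E3) : E3 :=
  WithLp.toLp 2 ![u 1 * v 2 - u 2 * v 1, u 2 * v 0 - u 0 * v 2, u 0 * v 1 - u 1 * v 0]

lemma inner_cross3_left' (u w : E3) : (inner ℝ u (cross3 u w) : ℝ) = 0 := by
  simp [cross3, PiLp.inner_apply, RCLike.inner_apply, Fin.sum_univ_three]
  ring

lemma inner_cross3_right' (u w : E3) : (inner ℝ w (cross3 u w) : ℝ) = 0 := by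
  simp [cross3, PiLp.inner_apply, RCLike.inner_apply, Fin.sum_univ_three]
  ring

/-- **Stretching of a filament under normal–binormal motion.**
If a smooth family of curves `R(σ,t)` with nowhere-vanishing tangent `R_σ`
evolves with velocity `∂ₜR = g n + h b` in the normal–binormal plane, then the
local stretching factor satisfies `∂ₜ|R_σ| = −gκ|R_σ|`; consequently the
arclength function `s(σ,t) = ∫₀^σ |R_σ'| dσ'` satisfies
`∂s/∂t = −∫₀^σ gκ |R_σ'| dσ' = −∫^s gκ ds'`. -/
theorem stretching_factor_normal_binormal_velocity
    (R T N B : ℝ → ℝ → E3) (κ g h : ℝ → ℝ → ℝ)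
    (hR : ContDiff ℝ (⊤ : ℕ∞) (fun p : ℝ × ℝ => R p.1 p.2))
    (hRσ : ∀ σ t, deriv (fun σ' => R σ' t) σ ≠ 0)
    (hT : ∀ σ t, T σ t =
      ‖deriv (fun σ' => R σ' t) σ‖⁻¹ • deriv (fun σ' => R σ' t) σ)
    (hκ : ∀ σ t, κ σ t =
      ‖(‖deriv (fun σ' => R σ' t) σ‖⁻¹ : ℝ) • deriv (fun σ' => T σ' t) σ‖)
    (hκpos : ∀ σ t, 0 < κ σ t)
    (hN : ∀ σ t, N σ t =
      (κ σ t)⁻¹ • ((‖deriv (fun σ' => R σ' t) σ‖⁻¹ : ℝ) • deriv (fun σ' => T σ' t) σ))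
    (hB : ∀ σ t, B σ t = cross3 (T σ t) (N σ t))
    (hg : ContDiff ℝ (⊤ : ℕ∞) (fun p : ℝ × ℝ => g p.1 p.2))
    (hh : ContDiff ℝ (⊤ : ℕ∞) (fun p : ℝ × ℝ => h p.1 p.2))
    (hvel : ∀ σ t, deriv (fun t' => R σ t') t = g σ t • N σ t + h σ t • B σ t) :
    ∀ σ t,
      deriv (fun t' => ‖deriv (fun σ' => R σ' t') σ‖) t
        = -(g σ t * κ σ t * ‖deriv (fun σ' => R σ' t) σ‖)
      ∧ deriv (fun t' => ∫ σ' in (0:ℝ)..σ, ‖deriv (fun σ'' => R σ'' t') σ'‖) t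
        = -∫ σ' in (0:ℝ)..σ, g σ' t * κ σ' t * ‖deriv (fun σ'' => R σ'' t) σ'‖ := by
  set F : ℝ × ℝ → E3 := fun p => R p.1 p.2 with hFdef
  have hFd : Differentiable ℝ F := hR.differentiable (by simp)
  set D1 : ℝ × ℝ → E3 := fun p => fderiv ℝ F p (1, 0) with hD1def
  set D2 : ℝ × ℝ → E3 := fun p => fderiv ℝ F p (0, 1) with hD2def
  have hfds : ContDiff ℝ (⊤ : ℕ∞) (fderiv ℝ F) := hR.fderiv_right (by simp)
  have hD1s : ContDiff ℝ (⊤ : ℕ∞) D1 :=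
    (ContinuousLinearMap.apply ℝ E3 ((1:ℝ), (0:ℝ))).contDiff.comp hfds
  have hcurve : ∀ σ t, HasDerivAt (fun σ' => R σ' t) (D1 (σ, t)) σ := by
    intro σ t
    have h1 : HasDerivAt (fun σ' : ℝ => ((σ' : ℝ), t)) ((1:ℝ), (0:ℝ)) σ :=
      (hasDerivAt_id σ).prodMk (hasDerivAt_const σ t)
    exact (hFd (σ, t)).hasFDerivAt.comp_hasDerivAt σ h1
  have hd1 : ∀ σ t, deriv (fun σ' => R σ' t) σ = D1 (σ, t) := fun σ t => (hcurve σ t).deriv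
  have htime : ∀ σ t, HasDerivAt (fun t' => R σ t') (D2 (σ, t)) t := by
    intro σ t
    have h1 : HasDerivAt (fun t' : ℝ => ((σ : ℝ), t')) ((0:ℝ), (1:ℝ)) t :=
      (hasDerivAt_const t σ).prodMk (hasDerivAt_id t)
    exact (hFd (σ, t)).hasFDerivAt.comp_hasDerivAt t h1
  have hd2 : ∀ σ t, deriv (fun t' => R σ t') t = D2 (σ, t) := fun σ t => (htime σ t).deriv
  set W : ℝ × ℝ → E3 := fun p => fderiv ℝ (fderiv ℝ F) p (0, 1) (1, 0) with hWdef
  have hsymm : ∀ p : ℝ × ℝ,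
      fderiv ℝ (fderiv ℝ F) p (1, 0) (0, 1) = W p := by
    intro p
    exact second_derivative_symmetric (fun y => (hFd y).hasFDerivAt)
      ((hfds.differentiable (by simp) p).hasFDerivAt) _ _
  have hA : ∀ σ t, HasDerivAt (fun t' => D1 (σ, t')) (W (σ, t)) t := by
    intro σ t
    have h1 : HasDerivAt (fun t' : ℝ => ((σ : ℝ), t')) ((0:ℝ), (1:ℝ)) t :=
      (hasDerivAt_const t σ).prodMk (hasDerivAt_id t)
    have h2 : HasFDerivAt D1
        ((ContinuousLinearMap.apply ℝ E3 ((1:ℝ), (0:ℝ))).comp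
          (fderiv ℝ (fderiv ℝ F) (σ, t))) (σ, t) :=
      (ContinuousLinearMap.apply ℝ E3 ((1:ℝ), (0:ℝ))).hasFDerivAt.comp _
        ((hfds.differentiable (by simp)) (σ, t)).hasFDerivAt
    exact h2.comp_hasDerivAt t h1
  have hB2 : ∀ σ t, HasDerivAt (fun σ' => D2 (σ', t)) (W (σ, t)) σ := by
    intro σ t
    have h1 : HasDerivAt (fun σ' : ℝ => ((σ' : ℝ), t)) ((1:ℝ), (0:ℝ)) σ :=
      (hasDerivAt_id σ).prodMk (hasDerivAt_const σ t)
    have h2 : HasFDerivAt D2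
        ((ContinuousLinearMap.apply ℝ E3 ((0:ℝ), (1:ℝ))).comp
          (fderiv ℝ (fderiv ℝ F) (σ, t))) (σ, t) :=
      (ContinuousLinearMap.apply ℝ E3 ((0:ℝ), (1:ℝ))).hasFDerivAt.comp _
        ((hfds.differentiable (by simp)) (σ, t)).hasFDerivAt
    have h3 := h2.comp_hasDerivAt σ h1
    simp only [ContinuousLinearMap.coe_comp', Function.comp_apply,
      ContinuousLinearMap.apply_apply] at h3
    rwa [hsymm (σ, t)] at h3
  -- nonvanishing of D1
  have hD1ne : ∀ p : ℝ × ℝ, D1 p ≠ 0 := by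
    intro p
    have := hRσ p.1 p.2
    rwa [hd1 p.1 p.2] at this
  have hD1norm_ne : ∀ p : ℝ × ℝ, ‖D1 p‖ ≠ 0 := fun p => norm_ne_zero_iff.mpr (hD1ne p)
  -- the unit tangent as a jointly smooth function
  set Tt : ℝ × ℝ → E3 := fun p => ‖D1 p‖⁻¹ • D1 p with hTtdef
  have hTts : ∀ p : ℝ × ℝ, ContDiffAt ℝ (⊤ : ℕ∞) Tt p := by
    intro p
    exact ((hD1s.contDiffAt.norm ℝ (hD1ne p)).inv (hD1norm_ne p)).smul hD1s.contDiffAt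
  have hTeq : ∀ σ t, T σ t = Tt (σ, t) := by
    intro σ t
    rw [hT σ t, hd1 σ t]
  set DT : ℝ × ℝ → E3 := fun p => fderiv ℝ Tt p (1, 0) with hDTdef
  have hTcurve : ∀ σ t, HasDerivAt (fun σ' => T σ' t) (DT (σ, t)) σ := by
    intro σ t
    have h1 : HasDerivAt (fun σ' : ℝ => ((σ' : ℝ), t)) ((1:ℝ), (0:ℝ)) σ :=
      (hasDerivAt_id σ).prodMk (hasDerivAt_const σ t)
    have h2 : HasDerivAt (fun σ' => Tt (σ', t)) (DT (σ, t)) σ := by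
      exact (((hTts (σ, t)).differentiableAt (by simp)).hasFDerivAt).comp_hasDerivAt σ h1
    have heq : (fun σ' => Tt (σ', t)) = fun σ' => T σ' t :=
      funext fun σ' => (hTeq σ' t).symm
    rwa [heq] at h2
  have hDTeq : ∀ σ t, deriv (fun σ' => T σ' t) σ = DT (σ, t) := fun σ t => (hTcurve σ t).deriv
  have hκeq : ∀ σ t, κ σ t = ‖(‖D1 (σ, t)‖⁻¹ : ℝ) • DT (σ, t)‖ := by
    intro σ t
    rw [hκ σ t, hd1 σ t, hDTeq σ t]
  -- unit norm facts
  have hTnorm : ∀ p : ℝ × ℝ, ‖Tt p‖ = 1 := by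
    intro p
    rw [hTtdef]
    simp only [norm_smul, norm_inv, norm_norm]
    exact inv_mul_cancel₀ (hD1norm_ne p)
  have hTinner : ∀ p : ℝ × ℝ, (inner ℝ (Tt p) (Tt p) : ℝ) = 1 := by
    intro p
    rw [real_inner_self_eq_norm_sq, hTnorm p]; norm_num
  -- T ⊥ DT
  have hTDT : ∀ σ t, (inner ℝ (Tt (σ, t)) (DT (σ, t)) : ℝ) = 0 := by
    intro σ t
    have hTσ : HasDerivAt (fun σ' => Tt (σ', t)) (DT (σ, t)) σ := by
      have h1 : HasDerivAt (fun σ' : ℝ => ((σ' : ℝ), t)) ((1:ℝ), (0:ℝ)) σ :=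
        (hasDerivAt_id σ).prodMk (hasDerivAt_const σ t)
      exact (((hTts (σ, t)).differentiableAt (by simp)).hasFDerivAt).comp_hasDerivAt σ h1
    have hder : HasDerivAt (fun σ' => (inner ℝ (Tt (σ', t)) (Tt (σ', t)) : ℝ))
        ((inner ℝ (Tt (σ, t)) (DT (σ, t)) : ℝ) + (inner ℝ (DT (σ, t)) (Tt (σ, t)) : ℝ)) σ :=
      hTσ.inner ℝ hTσ
    have hconst : (fun σ' => (inner ℝ (Tt (σ', t)) (Tt (σ', t)) : ℝ)) = fun _ => (1 : ℝ) :=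
      funext fun σ' => hTinner (σ', t)
    rw [hconst] at hder
    have h0 : (inner ℝ (Tt (σ, t)) (DT (σ, t)) : ℝ) + (inner ℝ (DT (σ, t)) (Tt (σ, t)) : ℝ) = 0 := by
      simpa using hder.deriv.symm
    have hcomm := real_inner_comm (DT (σ, t)) (Tt (σ, t))
    linarith
  -- N facts
  have hNeq : ∀ σ t, N σ t = (κ σ t)⁻¹ • ((‖D1 (σ, t)‖⁻¹ : ℝ) • DT (σ, t)) := by
    intro σ t
    rw [hN σ t, hd1 σ t, hDTeq σ t]
  have hκne : ∀ σ t, κ σ t ≠ 0 := fun σ t => (hκpos σ t).ne'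
  have hNnorm : ∀ σ t, ‖N σ t‖ = 1 := by
    intro σ t
    rw [hNeq σ t, norm_smul, norm_inv, Real.norm_eq_abs, abs_of_pos (hκpos σ t), ← hκeq σ t]
    exact inv_mul_cancel₀ (hκne σ t)
  have hNinner : ∀ σ t, (inner ℝ (N σ t) (N σ t) : ℝ) = 1 := by
    intro σ t
    rw [real_inner_self_eq_norm_sq, hNnorm σ t]; norm_num
  have hDT_N : ∀ σ t, DT (σ, t) = (κ σ t * ‖D1 (σ, t)‖) • N σ t := by
    intro σ t
    symm
    rw [hNeq σ t, mul_smul, smul_comm (‖D1 (σ, t)‖) ((κ σ t)⁻¹),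
      smul_inv_smul₀ (hD1norm_ne (σ, t)), smul_inv_smul₀ (hκne σ t)]
  have hTN : ∀ σ t, (inner ℝ (Tt (σ, t)) (N σ t) : ℝ) = 0 := by
    intro σ t
    rw [hNeq σ t, real_inner_smul_right, real_inner_smul_right, hTDT σ t]
    ring
  have hTB : ∀ σ t, (inner ℝ (Tt (σ, t)) (B σ t) : ℝ) = 0 := by
    intro σ t
    rw [hB σ t, hTeq σ t]
    exact inner_cross3_left' _ _
  have hNB : ∀ σ t, (inner ℝ (N σ t) (B σ t) : ℝ) = 0 := by
    intro σ t
    rw [hB σ t]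
    exact inner_cross3_right' _ _
  -- D2 = velocity
  have hvel' : ∀ σ t, D2 (σ, t) = g σ t • N σ t + h σ t • B σ t := by
    intro σ t
    rw [← hd2 σ t, hvel σ t]
  have hTv : ∀ σ t, (inner ℝ (Tt (σ, t)) (D2 (σ, t)) : ℝ) = 0 := by
    intro σ t
    rw [hvel' σ t, inner_add_right, real_inner_smul_right, real_inner_smul_right,
      hTN σ t, hTB σ t]
    ring
  have hNv : ∀ σ t, (inner ℝ (N σ t) (D2 (σ, t)) : ℝ) = g σ t := by
    intro σ t
    rw [hvel' σ t, inner_add_right, real_inner_smul_right, real_inner_smul_right,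
      hNinner σ t, hNB σ t]
    ring
  -- key inner product with W
  have hTW : ∀ σ t, (inner ℝ (Tt (σ, t)) (W (σ, t)) : ℝ)
      = -(g σ t * (κ σ t * ‖D1 (σ, t)‖)) := by
    intro σ t
    have hTσ : HasDerivAt (fun σ' => Tt (σ', t)) (DT (σ, t)) σ := by
      have h1 : HasDerivAt (fun σ' : ℝ => ((σ' : ℝ), t)) ((1:ℝ), (0:ℝ)) σ :=
        (hasDerivAt_id σ).prodMk (hasDerivAt_const σ t)
      exact (((hTts (σ, t)).differentiableAt (by simp)).hasFDerivAt).comp_hasDerivAt σ h1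
    have hder : HasDerivAt (fun σ' => (inner ℝ (Tt (σ', t)) (D2 (σ', t)) : ℝ))
        ((inner ℝ (Tt (σ, t)) (W (σ, t)) : ℝ) + (inner ℝ (DT (σ, t)) (D2 (σ, t)) : ℝ)) σ :=
      hTσ.inner ℝ (hB2 σ t)
    have hconst : (fun σ' => (inner ℝ (Tt (σ', t)) (D2 (σ', t)) : ℝ)) = fun _ => (0 : ℝ) :=
      funext fun σ' => hTv σ' t
    rw [hconst] at hder
    have h0 : (inner ℝ (Tt (σ, t)) (W (σ, t)) : ℝ)
        + (inner ℝ (DT (σ, t)) (D2 (σ, t)) : ℝ) = 0 := by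
      simpa using hder.deriv.symm
    have h1 : (inner ℝ (DT (σ, t)) (D2 (σ, t)) : ℝ) = κ σ t * ‖D1 (σ, t)‖ * g σ t := by
      rw [hDT_N σ t, real_inner_smul_left, hNv σ t]
    rw [h1] at h0
    linarith
  have hD1W : ∀ σ t, (inner ℝ (D1 (σ, t)) (W (σ, t)) : ℝ)
      = -(g σ t * κ σ t * ‖D1 (σ, t)‖ * ‖D1 (σ, t)‖) := by
    intro σ t
    have hd : D1 (σ, t) = ‖D1 (σ, t)‖ • Tt (σ, t) := by
      rw [hTtdef]
      simp only [smul_smul, mul_inv_cancel₀ (hD1norm_ne (σ, t)), one_smul]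
    have hsw : (inner ℝ (D1 (σ, t)) (W (σ, t)) : ℝ)
        = ‖D1 (σ, t)‖ * (inner ℝ (Tt (σ, t)) (W (σ, t)) : ℝ) := by
      conv_lhs => rw [hd]
      rw [real_inner_smul_left]
    rw [hsw, hTW σ t]
    ring
  -- Part 1 as HasDerivAt
  have key1 : ∀ σ t, HasDerivAt (fun t' => ‖deriv (fun σ' => R σ' t') σ‖)
      (-(g σ t * κ σ t * ‖deriv (fun σ' => R σ' t) σ‖)) t := by
    intro σ t
    have hq : HasDerivAt (fun t' => (inner ℝ (D1 (σ, t')) (D1 (σ, t')) : ℝ))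
        ((inner ℝ (D1 (σ, t)) (W (σ, t)) : ℝ) + (inner ℝ (W (σ, t)) (D1 (σ, t)) : ℝ)) t :=
      (hA σ t).inner ℝ (hA σ t)
    have hqne : (inner ℝ (D1 (σ, t)) (D1 (σ, t)) : ℝ) ≠ 0 := by
      rw [real_inner_self_eq_norm_sq]
      exact pow_ne_zero 2 (hD1norm_ne (σ, t))
    have hs := hq.sqrt hqne
    have hfun : (fun t' => Real.sqrt (inner ℝ (D1 (σ, t')) (D1 (σ, t')) : ℝ))
        = fun t' => ‖deriv (fun σ' => R σ' t') σ‖ := by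
      funext t'
      rw [real_inner_self_eq_norm_sq, Real.sqrt_sq (norm_nonneg _), hd1 σ t']
    rw [hfun] at hs
    have hsq : Real.sqrt (inner ℝ (D1 (σ, t)) (D1 (σ, t)) : ℝ) = ‖D1 (σ, t)‖ := by
      rw [real_inner_self_eq_norm_sq, Real.sqrt_sq (norm_nonneg _)]
    have hval : ((inner ℝ (D1 (σ, t)) (W (σ, t)) : ℝ) + (inner ℝ (W (σ, t)) (D1 (σ, t)) : ℝ))
        / (2 * Real.sqrt (inner ℝ (D1 (σ, t)) (D1 (σ, t)) : ℝ))
        = -(g σ t * κ σ t * ‖deriv (fun σ' => R σ' t) σ‖) := by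
      have hWD1 : (inner ℝ (W (σ, t)) (D1 (σ, t)) : ℝ)
          = -(g σ t * κ σ t * ‖D1 (σ, t)‖ * ‖D1 (σ, t)‖) := by
        rw [real_inner_comm]; exact hD1W σ t
      rw [hsq, hD1W σ t, hWD1, hd1 σ t]
      rw [div_eq_iff (mul_ne_zero two_ne_zero (hD1norm_ne (σ, t)))]
      ring
    rwa [hval] at hs
  -- joint continuity of the derivative integrand
  have hDTs : ∀ p : ℝ × ℝ, ContinuousAt DT p := by
    intro p
    have h1 : ContDiffAt ℝ (⊤ : ℕ∞) (fderiv ℝ Tt) p := (hTts p).fderiv_right (by simp)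
    exact ((ContinuousLinearMap.apply ℝ E3 ((1:ℝ), (0:ℝ))).continuous.continuousAt).comp
      h1.continuousAt
  have hφcont : Continuous (fun p : ℝ × ℝ => g p.1 p.2 * κ p.1 p.2 * ‖D1 p‖) := by
    have hκcont : Continuous (fun p : ℝ × ℝ => κ p.1 p.2) := by
      have : (fun p : ℝ × ℝ => κ p.1 p.2) = fun p => ‖(‖D1 p‖⁻¹ : ℝ) • DT p‖ :=
        funext fun p => hκeq p.1 p.2
      rw [this]
      apply Continuous.norm
      exact ((hD1s.continuous.norm.inv₀ hD1norm_ne).smul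
        (continuous_iff_continuousAt.mpr hDTs))
    exact (hg.continuous.mul hκcont).mul hD1s.continuous.norm
  intro σ t
  refine ⟨(key1 σ t).deriv, ?_⟩
  -- Part 2: differentiation under the integral sign
  obtain ⟨C, hC⟩ := (isCompact_uIcc.prod (isCompact_closedBall t 1)).exists_bound_of_continuousOn
    (s := Set.uIcc (0:ℝ) σ ×ˢ Metric.closedBall t 1) hφcont.continuousOn
  have e1 : ∀ᶠ t' in nhds t, MeasureTheory.AEStronglyMeasurable
      (fun σ' => ‖deriv (fun σ'' => R σ'' t') σ'‖)
      (MeasureTheory.volume.restrict (Set.uIoc (0:ℝ) σ)) := by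
    refine Filter.Eventually.of_forall fun t' => ?_
    have heq : (fun σ' => ‖deriv (fun σ'' => R σ'' t') σ'‖) = fun σ' => ‖D1 (σ', t')‖ :=
      funext fun σ' => by rw [hd1 σ' t']
    rw [heq]
    exact (hD1s.continuous.norm.comp (continuous_id.prodMk continuous_const)
      ).aestronglyMeasurable
  have e2 : IntervalIntegrable (fun σ' => ‖deriv (fun σ'' => R σ'' t) σ'‖)
      MeasureTheory.volume 0 σ := by
    have heq : (fun σ' => ‖deriv (fun σ'' => R σ'' t) σ'‖) = fun σ' => ‖D1 (σ', t)‖ :=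
      funext fun σ' => by rw [hd1 σ' t]
    rw [heq]
    exact ((hD1s.continuous.norm.comp (continuous_id.prodMk continuous_const))
      ).intervalIntegrable 0 σ
  have e3 : MeasureTheory.AEStronglyMeasurable
      (fun σ' => -(g σ' t * κ σ' t * ‖deriv (fun σ'' => R σ'' t) σ'‖))
      (MeasureTheory.volume.restrict (Set.uIoc (0:ℝ) σ)) := by
    have heq : (fun σ' => -(g σ' t * κ σ' t * ‖deriv (fun σ'' => R σ'' t) σ'‖))
        = fun σ' => -(g σ' t * κ σ' t * ‖D1 (σ', t)‖) :=
      funext fun σ' => by rw [hd1 σ' t]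
    rw [heq]
    exact ((hφcont.comp (continuous_id.prodMk continuous_const)).neg).aestronglyMeasurable
  have e4 : ∀ᵐ σ' ∂(MeasureTheory.volume : MeasureTheory.Measure ℝ), σ' ∈ Set.uIoc (0:ℝ) σ →
      ∀ t' ∈ Metric.ball t 1,
        ‖-(g σ' t' * κ σ' t' * ‖deriv (fun σ'' => R σ'' t') σ'‖)‖ ≤ C := by
    refine MeasureTheory.ae_of_all _ fun σ' hσ' t' ht' => ?_
    have hmem : (σ', t') ∈ Set.uIcc (0:ℝ) σ ×ˢ Metric.closedBall t 1 :=
      ⟨Set.uIoc_subset_uIcc hσ', Metric.ball_subset_closedBall ht'⟩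
    have hb := hC (σ', t') hmem
    rw [hd1 σ' t']
    simpa [norm_neg] using hb
  have e5 : IntervalIntegrable (fun _ : ℝ => C) MeasureTheory.volume 0 σ :=
    intervalIntegrable_const
  have e6 : ∀ᵐ σ' ∂(MeasureTheory.volume : MeasureTheory.Measure ℝ), σ' ∈ Set.uIoc (0:ℝ) σ →
      ∀ t' ∈ Metric.ball t 1,
        HasDerivAt (fun t'' => ‖deriv (fun σ'' => R σ'' t'') σ'‖)
          (-(g σ' t' * κ σ' t' * ‖deriv (fun σ'' => R σ'' t') σ'‖)) t' :=
    MeasureTheory.ae_of_all _ fun σ' _ t' _ => key1 σ' t'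
  have hint := (intervalIntegral.hasDerivAt_integral_of_dominated_loc_of_deriv_le
    (F := fun t' σ' => ‖deriv (fun σ'' => R σ'' t') σ'‖)
    (F' := fun t' σ' => -(g σ' t' * κ σ' t' * ‖deriv (fun σ'' => R σ'' t') σ'‖))
    (bound := fun _ : ℝ => C) (Metric.ball_mem_nhds t one_pos) e1 e2 e3 e4 e5 e6).2
  rw [hint.deriv, ← intervalIntegral.integral_neg]
end
end

section
/- Let R : ℝ × ℝ → ℝ³ be a smooth family of closed curves, 1-periodic in σ, with nowhere-vanishing tangent vector R_σ = ∂_σ R. Suppose F, W : ℝ × ℝ → ℝ³ are smooth, 1-periodic in σ, and satisfy the gauge-invariance condition R_σ · F = 0 and the exactness condition F = −∂_σ W. If the curve evolves under the Rasetti–Regge Dirac bracket dynamics ∂_t R = −(1/|R_σ|²) R_σ × F, then the vortex impulse I(t) = ∫₀¹ R × R_σ dσ is constant in time. That is, the vortex impulse is a Casimir of the Rasetti–Regge Dirac bracket: it is conserved under filament evolution generated by every gauge-invariant Hamiltonian whose variational derivative has this exact form. -/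
noncomputable section
open Real MeasureTheory

lemma cross3_add_left (u v w : E3) : cross3 (u + v) w = cross3 u w + cross3 v w := by
  ext i; fin_cases i <;> simp [cross3] <;> ring
lemma cross3_smul_left (a : ℝ) (u v : E3) : cross3 (a • u) v = a • cross3 u v := by
  ext i; fin_cases i <;> simp [cross3] <;> ring
lemma cross3_add_right (u v w : E3) : cross3 u (v + w) = cross3 u v + cross3 u w := by
  ext i; fin_cases i <;> simp [cross3] <;> ring
lemma cross3_smul_right (a : ℝ) (u v : E3) : cross3 u (a • v) = a • cross3 u v := by
  ext i; fin_cases i <;> simp [cross3] <;> ring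
lemma cross3_antisymm (u v : E3) : cross3 u v = -cross3 v u := by
  ext i; fin_cases i <;> simp [cross3] <;> ring
lemma cross3_lagrange (a b : E3) :
    cross3 (cross3 a b) a = (inner ℝ a a : ℝ) • b - (inner ℝ a b : ℝ) • a := by
  ext i; fin_cases i <;>
    simp [cross3, PiLp.inner_apply, Fin.sum_univ_three, RCLike.inner_apply,
      starRingEnd_apply, EuclideanSpace.real_norm_sq_eq] <;> ring

def crossLin : E3 →ₗ[ℝ] E3 →ₗ[ℝ] E3 :=
  LinearMap.mk₂ ℝ cross3 cross3_add_left cross3_smul_left cross3_add_right cross3_smul_right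

def crossCLM : E3 →L[ℝ] E3 →L[ℝ] E3 :=
  LinearMap.toContinuousLinearMap
    { toFun := fun u => LinearMap.toContinuousLinearMap (crossLin u)
      map_add' := by intro u v; ext w; simp [crossLin, cross3_add_left]
      map_smul' := by intro a u; ext w; simp [crossLin, cross3_smul_left] }

@[simp] lemma crossCLM_apply (u v : E3) : crossCLM u v = cross3 u v := rfl

lemma HasDerivAt.cross3' {u v : ℝ → E3} {u' v' : E3} {x : ℝ}
    (hu : HasDerivAt u u' x) (hv : HasDerivAt v v' x) :
    HasDerivAt (fun s => cross3 (u s) (v s)) (cross3 u' (v x) + cross3 (u x) v') x := by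
  have hc : HasDerivAt (fun s => crossCLM (u s)) (crossCLM u') x :=
    crossCLM.hasFDerivAt.comp_hasDerivAt x hu
  simpa using hc.clm_apply hv

lemma contDiff_cross3 {u v : ℝ × ℝ → E3} {n : WithTop ℕ∞}
    (hu : ContDiff ℝ n u) (hv : ContDiff ℝ n v) :
    ContDiff ℝ n fun p => cross3 (u p) (v p) := by
  have : ContDiff ℝ n fun p => crossCLM (u p) := crossCLM.contDiff.comp hu
  simpa using this.clm_apply hv

section partials
variable {G : Type*} [NormedAddCommGroup G] [NormedSpace ℝ G]

lemma hasDerivAt_partial_fst {u : ℝ × ℝ → G} (hu : Differentiable ℝ u) (σ t : ℝ) :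
    HasDerivAt (fun σ' => u (σ', t)) (fderiv ℝ u (σ, t) (1, 0)) σ := by
  have h1 : HasDerivAt (fun σ' : ℝ => ((σ' : ℝ), t)) ((1:ℝ), (0:ℝ)) σ :=
    (hasDerivAt_id σ).prodMk (hasDerivAt_const σ t)
  exact (hu (σ, t)).hasFDerivAt.comp_hasDerivAt σ h1

lemma hasDerivAt_partial_snd {u : ℝ × ℝ → G} (hu : Differentiable ℝ u) (σ t : ℝ) :
    HasDerivAt (fun t' => u (σ, t')) (fderiv ℝ u (σ, t) (0, 1)) t := by
  have h1 : HasDerivAt (fun t' : ℝ => ((σ : ℝ), t')) ((0:ℝ), (1:ℝ)) t :=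
    (hasDerivAt_const t σ).prodMk (hasDerivAt_id t)
  exact (hu (σ, t)).hasFDerivAt.comp_hasDerivAt t h1

end partials

/-- **The vortex impulse is a Casimir of the Rasetti–Regge Dirac bracket.**
Let `R(σ,t)` be a smooth family of closed curves (1-periodic in σ) with
nowhere-vanishing tangent `R_σ`, and let `F = δH/δR` be smooth, 1-periodic,
gauge invariant (`R_σ · F = 0`) and exact (`F = −∂_σ W` for a smooth periodic
`W`).  If the curve evolves by the Rasetti–Regge dynamics
`∂ₜR = −|R_σ|⁻² R_σ × F`, then the vortex impulse `I(t) = ∫₀¹ R × R_σ dσ`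
is constant in time. -/
theorem vortex_impulse_is_Casimir_of_RasettiRegge
    (R F W : ℝ → ℝ → E3)
    (hR : ContDiff ℝ (⊤ : ℕ∞) (fun p : ℝ × ℝ => R p.1 p.2))
    (hF : ContDiff ℝ (⊤ : ℕ∞) (fun p : ℝ × ℝ => F p.1 p.2))
    (hW : ContDiff ℝ (⊤ : ℕ∞) (fun p : ℝ × ℝ => W p.1 p.2))
    (hRper : ∀ σ t, R (σ + 1) t = R σ t)
    (hFper : ∀ σ t, F (σ + 1) t = F σ t)
    (hWper : ∀ σ t, W (σ + 1) t = W σ t)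
    (hRσ : ∀ σ t, deriv (fun σ' => R σ' t) σ ≠ 0)
    (hgauge : ∀ σ t, (inner ℝ (deriv (fun σ' => R σ' t) σ) (F σ t) : ℝ) = 0)
    (hexact : ∀ σ t, F σ t = -deriv (fun σ' => W σ' t) σ)
    (hdyn : ∀ σ t, deriv (fun t' => R σ t') t =
      -((‖deriv (fun σ' => R σ' t) σ‖ ^ 2)⁻¹ •
          cross3 (deriv (fun σ' => R σ' t) σ) (F σ t))) :
    ∀ t₁ t₂ : ℝ,
      (∫ σ in (0:ℝ)..1, cross3 (R σ t₁) (deriv (fun σ' => R σ' t₁) σ))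
        = ∫ σ in (0:ℝ)..1, cross3 (R σ t₂) (deriv (fun σ' => R σ' t₂) σ) := by
  have hRd : Differentiable ℝ (fun p : ℝ × ℝ => R p.1 p.2) := hR.differentiable (by simp)
  have hWd : Differentiable ℝ (fun p : ℝ × ℝ => W p.1 p.2) := hW.differentiable (by simp)
  set Df : ℝ × ℝ → (ℝ × ℝ) →L[ℝ] E3 := fderiv ℝ (fun p : ℝ × ℝ => R p.1 p.2) with hDf_def
  set DW : ℝ × ℝ → (ℝ × ℝ) →L[ℝ] E3 := fderiv ℝ (fun p : ℝ × ℝ => W p.1 p.2) with hDW_def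
  have hDf : ContDiff ℝ (⊤ : ℕ∞) Df := hR.fderiv_right (by simp)
  have hDW : ContDiff ℝ (⊤ : ℕ∞) DW := hW.fderiv_right (by simp)
  have hDfd : Differentiable ℝ Df := hDf.differentiable (by simp)
  set D2 : ℝ × ℝ → (ℝ × ℝ) →L[ℝ] (ℝ × ℝ) →L[ℝ] E3 := fderiv ℝ Df with hD2_def
  have hD2 : ContDiff ℝ (⊤ : ℕ∞) D2 := hDf.fderiv_right (by simp)
  -- partial derivatives
  have hRσ_eq : ∀ σ t, deriv (fun σ' => R σ' t) σ = Df (σ, t) (1, 0) :=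
    fun σ t => (hasDerivAt_partial_fst hRd σ t).deriv
  have hRt_eq : ∀ σ t, deriv (fun t' => R σ t') t = Df (σ, t) (0, 1) :=
    fun σ t => (hasDerivAt_partial_snd hRd σ t).deriv
  have hWσ_eq : ∀ σ t, deriv (fun σ' => W σ' t) σ = DW (σ, t) (1, 0) :=
    fun σ t => (hasDerivAt_partial_fst hWd σ t).deriv
  -- symmetry of second derivatives
  have hsymm : ∀ p : ℝ × ℝ, ∀ v w, D2 p v w = D2 p w v := fun p v w =>
    second_derivative_symmetric (fun y => (hRd y).hasFDerivAt) ((hDfd p).hasFDerivAt) v w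
  -- mixed partials
  have hmix1 : ∀ σ t, HasDerivAt (fun t' => Df (σ, t') (1, 0)) (D2 (σ, t) (1, 0) (0, 1)) t := by
    intro σ t
    have h := (hasDerivAt_partial_snd hDfd σ t).clm_apply
      (hasDerivAt_const t (((1:ℝ), (0:ℝ)) : ℝ × ℝ))
    rw [← hD2_def] at h
    simpa [hsymm (σ, t) (0, 1) (1, 0)] using h
  have hmix2 : ∀ σ t, HasDerivAt (fun σ' => Df (σ', t) (0, 1)) (D2 (σ, t) (1, 0) (0, 1)) σ := by
    intro σ t
    have h := (hasDerivAt_partial_fst hDfd σ t).clm_apply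
      (hasDerivAt_const σ (((0:ℝ), (1:ℝ)) : ℝ × ℝ))
    rw [← hD2_def] at h
    simpa using h
  -- the key identity : cross(R_t, R_σ) = ∂_σ W
  have hkey : ∀ σ t, cross3 (Df (σ, t) (0, 1)) (Df (σ, t) (1, 0)) = DW (σ, t) (1, 0) := by
    intro σ t
    have hd := hdyn σ t
    rw [hRt_eq, hRσ_eq] at hd
    have hg : (inner ℝ (Df (σ, t) (1, 0)) (F σ t) : ℝ) = 0 := by
      rw [← hRσ_eq]; exact hgauge σ t
    have hne : Df (σ, t) (1, 0) ≠ 0 := by rw [← hRσ_eq]; exact hRσ σ t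
    have hnorm : (‖Df (σ, t) (1, 0)‖ : ℝ) ^ 2 ≠ 0 :=
      pow_ne_zero _ (norm_ne_zero_iff.mpr hne)
    have hex : DW (σ, t) (1, 0) = -F σ t := by
      rw [← hWσ_eq]
      have := hexact σ t
      rw [this]; simp
    rw [hd, hex]
    rw [show -((‖Df (σ, t) (1, 0)‖ ^ 2)⁻¹ • cross3 (Df (σ, t) (1, 0)) (F σ t))
        = ((-(‖Df (σ, t) (1, 0)‖ ^ 2)⁻¹) • cross3 (Df (σ, t) (1, 0)) (F σ t)) by
      rw [neg_smul]]
    rw [cross3_smul_left, cross3_lagrange, hg, real_inner_self_eq_norm_sq]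
    rw [zero_smul, sub_zero, smul_smul, neg_mul, inv_mul_cancel₀ hnorm]
    simp
  -- σ-derivative of Q and t-derivative of the impulse density are both g
  have hQd : ∀ σ t, HasDerivAt
      (fun σ' => (2:ℝ) • W σ' t + cross3 (R σ' t) (Df (σ', t) (0, 1)))
      ((2:ℝ) • DW (σ, t) (1, 0) +
        (cross3 (Df (σ, t) (1, 0)) (Df (σ, t) (0, 1)) +
          cross3 (R σ t) (D2 (σ, t) (1, 0) (0, 1)))) σ := by
    intro σ t
    exact ((hasDerivAt_partial_fst hWd σ t).const_smul (2:ℝ)).add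
      ((hasDerivAt_partial_fst hRd σ t).cross3' (hmix2 σ t))
  have hCd : ∀ σ t, HasDerivAt
      (fun t' => cross3 (R σ t') (Df (σ, t') (1, 0)))
      ((2:ℝ) • DW (σ, t) (1, 0) +
        (cross3 (Df (σ, t) (1, 0)) (Df (σ, t) (0, 1)) +
          cross3 (R σ t) (D2 (σ, t) (1, 0) (0, 1)))) t := by
    intro σ t
    have h := (hasDerivAt_partial_snd hRd σ t).cross3' (hmix1 σ t)
    convert h using 1
    rw [cross3_antisymm (Df (σ, t) (1, 0)) (Df (σ, t) (0, 1)), hkey σ t]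
    module
  -- continuity of g (uncurried)
  have hgc : Continuous (fun p : ℝ × ℝ =>
      (2:ℝ) • DW p (1, 0) +
        (cross3 (Df p (1, 0)) (Df p (0, 1)) + cross3 (R p.1 p.2) (D2 p (1, 0) (0, 1)))) := by
    have c1 : ContDiff ℝ (⊤ : ℕ∞) fun p : ℝ × ℝ => DW p (1, 0) :=
      hDW.clm_apply contDiff_const
    have c2 : ContDiff ℝ (⊤ : ℕ∞) fun p : ℝ × ℝ => Df p (1, 0) :=
      hDf.clm_apply contDiff_const
    have c3 : ContDiff ℝ (⊤ : ℕ∞) fun p : ℝ × ℝ => Df p (0, 1) :=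
      hDf.clm_apply contDiff_const
    have c4 : ContDiff ℝ (⊤ : ℕ∞) fun p : ℝ × ℝ => D2 p (1, 0) (0, 1) :=
      (hD2.clm_apply contDiff_const).clm_apply contDiff_const
    exact ((c1.const_smul (2:ℝ)).add
      ((contDiff_cross3 c2 c3).add (contDiff_cross3 hR c4))).continuous
  have hCc : Continuous (fun p : ℝ × ℝ => cross3 (R p.1 p.2) (Df p (1, 0))) := by
    have c2 : ContDiff ℝ (⊤ : ℕ∞) fun p : ℝ × ℝ => Df p (1, 0) :=
      hDf.clm_apply contDiff_const
    exact (contDiff_cross3 hR c2).continuous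
  -- the σ-integral of g vanishes (FTC + periodicity)
  have hIσ : ∀ t : ℝ, (∫ σ in (0:ℝ)..1,
      ((2:ℝ) • DW (σ, t) (1, 0) +
        (cross3 (Df (σ, t) (1, 0)) (Df (σ, t) (0, 1)) +
          cross3 (R σ t) (D2 (σ, t) (1, 0) (0, 1))))) = 0 := by
    intro t
    have hint : IntervalIntegrable (fun σ =>
        (2:ℝ) • DW (σ, t) (1, 0) +
          (cross3 (Df (σ, t) (1, 0)) (Df (σ, t) (0, 1)) +
            cross3 (R σ t) (D2 (σ, t) (1, 0) (0, 1)))) volume 0 1 :=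
      (hgc.comp (continuous_id.prodMk continuous_const)).intervalIntegrable 0 1
    rw [intervalIntegral.integral_eq_sub_of_hasDerivAt (fun σ _ => hQd σ t) hint]
    have hW01 : W 1 t = W 0 t := by have := hWper 0 t; rwa [zero_add] at this
    have hR01 : R 1 t = R 0 t := by have := hRper 0 t; rwa [zero_add] at this
    have hDf01 : Df (1, t) (0, 1) = Df (0, t) (0, 1) := by
      rw [← hRt_eq 1 t, ← hRt_eq 0 t]
      congr 1
      funext t'
      have := hRper 0 t'; rwa [zero_add] at this
    rw [hW01, hR01, hDf01, sub_self]
  -- time FTC for the impulse density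
  have hFt : ∀ (s u : ℝ) (σ : ℝ),
      cross3 (R σ u) (Df (σ, u) (1, 0)) - cross3 (R σ s) (Df (σ, s) (1, 0))
        = ∫ t in s..u, ((2:ℝ) • DW (σ, t) (1, 0) +
            (cross3 (Df (σ, t) (1, 0)) (Df (σ, t) (0, 1)) +
              cross3 (R σ t) (D2 (σ, t) (1, 0) (0, 1)))) := by
    intro s u σ
    have hint : IntervalIntegrable (fun t =>
        (2:ℝ) • DW (σ, t) (1, 0) +
          (cross3 (Df (σ, t) (1, 0)) (Df (σ, t) (0, 1)) +
            cross3 (R σ t) (D2 (σ, t) (1, 0) (0, 1)))) volume s u :=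
      (hgc.comp (continuous_const.prodMk continuous_id)).intervalIntegrable s u
    rw [intervalIntegral.integral_eq_sub_of_hasDerivAt (fun t _ => hCd σ t) hint]
  -- main argument, for s ≤ u
  have key : ∀ s u : ℝ, s ≤ u →
      (∫ σ in (0:ℝ)..1, cross3 (R σ s) (Df (σ, s) (1, 0)))
        = ∫ σ in (0:ℝ)..1, cross3 (R σ u) (Df (σ, u) (1, 0)) := by
    intro s u hsu
    have hInt : ∀ t : ℝ, IntervalIntegrable
        (fun σ => cross3 (R σ t) (Df (σ, t) (1, 0))) volume 0 1 :=
      fun t => (hCc.comp (continuous_id.prodMk continuous_const)).intervalIntegrable 0 1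
    rw [eq_comm, ← sub_eq_zero, ← intervalIntegral.integral_sub (hInt u) (hInt s)]
    have step1 : (∫ σ in (0:ℝ)..1,
        (cross3 (R σ u) (Df (σ, u) (1, 0)) - cross3 (R σ s) (Df (σ, s) (1, 0))))
        = ∫ σ in (0:ℝ)..1, ∫ t in s..u,
            ((2:ℝ) • DW (σ, t) (1, 0) +
              (cross3 (Df (σ, t) (1, 0)) (Df (σ, t) (0, 1)) +
                cross3 (R σ t) (D2 (σ, t) (1, 0) (0, 1)))) := by
      apply intervalIntegral.integral_congr
      intro σ _
      exact hFt s u σ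
    rw [step1]
    -- convert to set integrals and use Fubini
    have hprodInt : Integrable
        (Function.uncurry (fun σ t =>
          (2:ℝ) • DW (σ, t) (1, 0) +
            (cross3 (Df (σ, t) (1, 0)) (Df (σ, t) (0, 1)) +
              cross3 (R σ t) (D2 (σ, t) (1, 0) (0, 1)))))
        ((volume.restrict (Set.Ioc (0:ℝ) 1)).prod (volume.restrict (Set.Ioc s u))) := by
      rw [Measure.prod_restrict]
      apply (hgc.continuousOn.integrableOn_compact
        ((isCompact_Icc (a := (0:ℝ)) (b := 1)).prod (isCompact_Icc (a := s) (b := u)))).mono_set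
      exact Set.prod_mono Set.Ioc_subset_Icc_self Set.Ioc_subset_Icc_self
    calc (∫ σ in (0:ℝ)..1, ∫ t in s..u,
            ((2:ℝ) • DW (σ, t) (1, 0) +
              (cross3 (Df (σ, t) (1, 0)) (Df (σ, t) (0, 1)) +
                cross3 (R σ t) (D2 (σ, t) (1, 0) (0, 1)))))
        = ∫ σ in Set.Ioc (0:ℝ) 1, ∫ t in Set.Ioc s u,
            ((2:ℝ) • DW (σ, t) (1, 0) +
              (cross3 (Df (σ, t) (1, 0)) (Df (σ, t) (0, 1)) +
                cross3 (R σ t) (D2 (σ, t) (1, 0) (0, 1)))) := by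
          rw [intervalIntegral.integral_of_le (zero_le_one)]
          congr 1
          funext σ
          rw [intervalIntegral.integral_of_le hsu]
      _ = ∫ t in Set.Ioc s u, ∫ σ in Set.Ioc (0:ℝ) 1,
            ((2:ℝ) • DW (σ, t) (1, 0) +
              (cross3 (Df (σ, t) (1, 0)) (Df (σ, t) (0, 1)) +
                cross3 (R σ t) (D2 (σ, t) (1, 0) (0, 1)))) :=
          MeasureTheory.integral_integral_swap hprodInt
      _ = 0 := by
          have : ∀ t : ℝ, (∫ σ in Set.Ioc (0:ℝ) 1,
              ((2:ℝ) • DW (σ, t) (1, 0) +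
                (cross3 (Df (σ, t) (1, 0)) (Df (σ, t) (0, 1)) +
                  cross3 (R σ t) (D2 (σ, t) (1, 0) (0, 1))))) = 0 := by
            intro t
            rw [← intervalIntegral.integral_of_le (zero_le_one)]
            exact hIσ t
          simp only [this, integral_zero]
  -- finish
  intro t₁ t₂
  simp only [hRσ_eq]
  rcases le_total t₁ t₂ with h | h
  · exact key t₁ t₂ h
  · exact (key t₂ t₁ h).symm
end
end

section
/- Let X : ℝ × ℝ → ℝ³ be a smooth family of space curves such that for every time t the curve s ↦ X(s,t) is parametrized by arclength (|∂_s X| = 1) with nowhere-vanishing curvature κ(s,t) > 0, and suppose X satisfies the helicity-driven LIA filament equation ∂_t X = (1/2)κ² t + κ_s n + κτ b. Then the unit tangent vector evolves according to ∂_t t = (κ_ss − κτ² + (1/2)κ³) n + (2 κ_s τ + κ τ_s) b, where subscripts on κ and τ denote ∂_s derivatives. -/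
noncomputable section

open Real
open scoped ContDiff

lemma finmk2 : (⟨2, by norm_num⟩ : Fin 3) = (2 : Fin 3) := rfl

lemma inner3 (u v : E3) : (inner ℝ u v : ℝ) = u 0 * v 0 + u 1 * v 1 + u 2 * v 2 := by
  simp [PiLp.inner_apply, Fin.sum_univ_three, RCLike.inner_apply, mul_comm]

lemma cross3_apply0 (u v : E3) : cross3 u v 0 = u 1 * v 2 - u 2 * v 1 := rfl
lemma cross3_apply1 (u v : E3) : cross3 u v 1 = u 2 * v 0 - u 0 * v 2 := rfl
lemma cross3_apply2 (u v : E3) : cross3 u v 2 = u 0 * v 1 - u 1 * v 0 := rfl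

lemma cross3_inner_left (u v : E3) : (inner ℝ (cross3 u v) u : ℝ) = 0 := by
  simp [PiLp.inner_apply, RCLike.inner_apply, Fin.sum_univ_three, cross3_apply0, cross3_apply1, cross3_apply2]; ring

lemma cross3_inner_right (u v : E3) : (inner ℝ (cross3 u v) v : ℝ) = 0 := by
  simp [PiLp.inner_apply, RCLike.inner_apply, Fin.sum_univ_three, cross3_apply0, cross3_apply1, cross3_apply2]; ring

lemma cross3_inner_self (u v : E3) :
    (inner ℝ (cross3 u v) (cross3 u v) : ℝ)
      = (inner ℝ u u : ℝ) * (inner ℝ v v : ℝ) - (inner ℝ u v : ℝ)^2 := by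
  rw [inner3, inner3, inner3, inner3]; simp only [cross3_apply0, cross3_apply1, cross3_apply2]; ring

lemma cross3_cross3 (u v w : E3) :
    cross3 (cross3 u v) w = (inner ℝ u w : ℝ) • v - (inner ℝ v w : ℝ) • u := by
  ext i
  fin_cases i <;>
    simp only [cross3_apply0, cross3_apply1, cross3_apply2, inner3, PiLp.sub_apply,
      PiLp.smul_apply, smul_eq_mul, Fin.mk_zero, Fin.mk_one, finmk2, Fin.isValue] <;> ring

lemma cross3_cross3' (u v w : E3) :
    cross3 u (cross3 v w) = (inner ℝ u w : ℝ) • v - (inner ℝ u v : ℝ) • w := by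
  ext i
  fin_cases i <;>
    simp only [cross3_apply0, cross3_apply1, cross3_apply2, inner3, PiLp.sub_apply,
      PiLp.smul_apply, smul_eq_mul, Fin.mk_zero, Fin.mk_one, finmk2, Fin.isValue] <;> ring

lemma complete3 (T N : E3) (hT : (inner ℝ T T : ℝ) = 1) (hN : (inner ℝ N N : ℝ) = 1)
    (hTN : (inner ℝ T N : ℝ) = 0) (v : E3) :
    v = (inner ℝ v T : ℝ) • T + (inner ℝ v N : ℝ) • N
        + (inner ℝ v (cross3 T N) : ℝ) • (cross3 T N) := by
  set B := cross3 T N with hBdef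
  have hz : cross3 B v = (inner ℝ T v : ℝ) • N - (inner ℝ N v : ℝ) • T := cross3_cross3 T N v
  have h1 : cross3 B (cross3 B v) = (inner ℝ B v : ℝ) • B - (inner ℝ B B : ℝ) • v :=
    cross3_cross3' B B v
  have hBB : (inner ℝ B B : ℝ) = 1 := by
    rw [hBdef, cross3_inner_self, hT, hN, hTN]; ring
  have h2 : cross3 B (cross3 B v)
      = (inner ℝ T v : ℝ) • (cross3 B N) - (inner ℝ N v : ℝ) • (cross3 B T) := by
    rw [hz]
    ext i
    fin_cases i <;>
      simp only [cross3_apply0, cross3_apply1, cross3_apply2, PiLp.sub_apply,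
        PiLp.smul_apply, smul_eq_mul, Fin.mk_zero, Fin.mk_one, finmk2, Fin.isValue] <;> ring
  have hBN : cross3 B N = -T := by
    rw [hBdef, cross3_cross3, hTN, hN]; module
  have hBT : cross3 B T = N := by
    rw [hBdef, cross3_cross3, hT, show (inner ℝ N T : ℝ) = 0 by rw [real_inner_comm]; exact hTN]; module
  rw [hBN, hBT] at h2
  rw [h2, hBB] at h1
  have hvT : (inner ℝ v T : ℝ) = (inner ℝ T v : ℝ) := real_inner_comm _ _
  have hvN : (inner ℝ v N : ℝ) = (inner ℝ N v : ℝ) := real_inner_comm _ _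
  have hvB : (inner ℝ v B : ℝ) = (inner ℝ B v : ℝ) := real_inner_comm _ _
  rw [hvT, hvN, hvB]
  linear_combination (norm := module) h1

variable {V : Type*} [NormedAddCommGroup V] [NormedSpace ℝ V]

lemma deriv_slice_fst (F : ℝ × ℝ → V) (s t : ℝ) (hF : DifferentiableAt ℝ F (s, t)) :
    deriv (fun s' => F (s', t)) s = fderiv ℝ F (s, t) (1, 0) := by
  have h : HasDerivAt (fun s' => (s', t)) ((1 : ℝ), (0 : ℝ)) s :=
    (hasDerivAt_id s).prodMk (hasDerivAt_const s t)
  exact (hF.hasFDerivAt.comp_hasDerivAt s h).deriv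

lemma deriv_slice_snd (F : ℝ × ℝ → V) (s t : ℝ) (hF : DifferentiableAt ℝ F (s, t)) :
    deriv (fun t' => F (s, t')) t = fderiv ℝ F (s, t) (0, 1) := by
  have h : HasDerivAt (fun t' => (s, t')) ((0 : ℝ), (1 : ℝ)) t :=
    (hasDerivAt_const t s).prodMk (hasDerivAt_id t)
  exact (hF.hasFDerivAt.comp_hasDerivAt t h).deriv

lemma mixed_symm (F : ℝ × ℝ → V) (hF : ContDiff ℝ ∞ F) (s t : ℝ) :
    deriv (fun t' => deriv (fun s' => F (s', t')) s) t
      = deriv (fun s' => deriv (fun t' => F (s', t')) t) s := by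
  have hle : (∞ : WithTop ℕ∞) ≠ 0 := by simp
  have hd : Differentiable ℝ F := hF.differentiable hle
  have hf' : ContDiff ℝ ∞ (fderiv ℝ F) := hF.fderiv_right (by exact_mod_cast le_top)
  set f'' := fderiv ℝ (fderiv ℝ F) (s, t) with hf''def
  have hx : HasFDerivAt (fderiv ℝ F) f'' (s, t) :=
    (hf'.differentiable hle (s, t)).hasFDerivAt
  have hsymm := second_derivative_symmetric (fun y => (hd y).hasFDerivAt) hx (0, 1) (1, 0)
  have hGu : ∀ u : ℝ × ℝ, ContDiff ℝ ∞ (fun p => fderiv ℝ F p u) := fun u =>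
    hf'.clm_apply contDiff_const
  have hfd : ∀ u : ℝ × ℝ, HasFDerivAt (fun p => fderiv ℝ F p u)
      (((ContinuousLinearMap.apply ℝ V u)).comp f'') (s, t) := fun u =>
    (ContinuousLinearMap.apply ℝ V u).hasFDerivAt.comp (s, t) hx
  calc deriv (fun t' => deriv (fun s' => F (s', t')) s) t
      = deriv (fun t' => fderiv ℝ F (s, t') (1, 0)) t := by
        congr 1; funext t'; exact deriv_slice_fst F s t' (hd _)
    _ = fderiv ℝ (fun p => fderiv ℝ F p (1, 0)) (s, t) (0, 1) :=
        deriv_slice_snd _ s t ((hGu (1, 0)).differentiable hle (s, t))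
    _ = f'' (0, 1) (1, 0) := by rw [(hfd (1, 0)).fderiv]; rfl
    _ = f'' (1, 0) (0, 1) := hsymm
    _ = fderiv ℝ (fun p => fderiv ℝ F p (0, 1)) (s, t) (1, 0) := by
        rw [(hfd (0, 1)).fderiv]; rfl
    _ = deriv (fun s' => fderiv ℝ F (s', t) (0, 1)) s :=
        (deriv_slice_fst _ s t ((hGu (0, 1)).differentiable hle (s, t))).symm
    _ = deriv (fun s' => deriv (fun t' => F (s', t')) t) s := by
        congr 1; funext s'; exact (deriv_slice_snd F s' t (hd _)).symm

lemma contDiff_cross3_s11 {Tf Nf : ℝ → E3} (hT : ContDiff ℝ ∞ Tf)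
    (hN : ContDiff ℝ ∞ Nf) :
    ContDiff ℝ ∞ (fun s => cross3 (Tf s) (Nf s)) := by
  have hTc := contDiff_euclidean.mp hT
  have hNc := contDiff_euclidean.mp hN
  apply contDiff_euclidean.mpr
  intro i
  fin_cases i
  · simp only [cross3_apply0]; exact ((hTc 1).mul (hNc 2)).sub ((hTc 2).mul (hNc 1))
  · simp only [cross3_apply1]; exact ((hTc 2).mul (hNc 0)).sub ((hTc 0).mul (hNc 2))
  · simp only [cross3_apply2]; exact ((hTc 0).mul (hNc 1)).sub ((hTc 1).mul (hNc 0))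

lemma key (f Tf Nf Bf : ℝ → E3) (κf τf : ℝ → ℝ) (s₀ : ℝ)
    (hf : ContDiff ℝ ∞ f)
    (hTf : Tf = deriv f)
    (hUnit : ∀ s, ‖Tf s‖ = 1)
    (hκf : ∀ s, κf s = ‖deriv Tf s‖)
    (hκpos : ∀ s, 0 < κf s)
    (hNf : ∀ s, Nf s = (κf s)⁻¹ • deriv Tf s)
    (hBf : ∀ s, Bf s = cross3 (Tf s) (Nf s))
    (hτf : ∀ s, τf s = -(inner ℝ (deriv Bf s) (Nf s) : ℝ)) :
    deriv (fun s => ((1/2) * (κf s)^2) • Tf s + (deriv κf s) • Nf s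
        + (κf s * τf s) • Bf s) s₀
      = (deriv (deriv κf) s₀ - κf s₀ * (τf s₀)^2 + (1/2) * (κf s₀)^3) • Nf s₀
        + (2 * deriv κf s₀ * τf s₀ + κf s₀ * deriv τf s₀) • Bf s₀ := by
  -- smoothness
  have hTC : ContDiff ℝ ∞ Tf := by
    rw [hTf]; exact (contDiff_infty_iff_deriv.mp hf).2
  have hTsC : ContDiff ℝ ∞ (deriv Tf) := (contDiff_infty_iff_deriv.mp hTC).2
  have hTsne : ∀ s, deriv Tf s ≠ 0 := by
    intro s
    have := hκpos s
    rw [hκf s] at this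
    exact norm_pos_iff.mp this
  have hκC : ContDiff ℝ ∞ κf := by
    have : κf = fun s => ‖deriv Tf s‖ := funext hκf
    rw [this]
    exact contDiff_iff_contDiffAt.mpr fun s => hTsC.contDiffAt.norm ℝ (hTsne s)
  have hκne : ∀ s, κf s ≠ 0 := fun s => ne_of_gt (hκpos s)
  have hNC : ContDiff ℝ ∞ Nf := by
    have : Nf = fun s => (κf s)⁻¹ • deriv Tf s := funext hNf
    rw [this]
    exact (hκC.inv hκne).smul hTsC
  have hBC : ContDiff ℝ ∞ Bf := by
    have : Bf = fun s => cross3 (Tf s) (Nf s) := funext hBf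
    rw [this]; exact contDiff_cross3_s11 hTC hNC
  have hBsC : ContDiff ℝ ∞ (deriv Bf) := (contDiff_infty_iff_deriv.mp hBC).2
  have hτC : ContDiff ℝ ∞ τf := by
    have : τf = fun s => -(inner ℝ (deriv Bf s) (Nf s) : ℝ) := funext hτf
    rw [this]
    exact (ContDiff.inner ℝ hBsC hNC).neg
  have hκ'C : ContDiff ℝ ∞ (deriv κf) := (contDiff_infty_iff_deriv.mp hκC).2
  have hle : (∞ : WithTop ℕ∞) ≠ 0 := by simp
  -- HasDerivAt bundles
  have dT : ∀ s, HasDerivAt Tf (deriv Tf s) s :=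
    fun s => (hTC.differentiable hle s).hasDerivAt
  have dN : ∀ s, HasDerivAt Nf (deriv Nf s) s :=
    fun s => (hNC.differentiable hle s).hasDerivAt
  have dB : ∀ s, HasDerivAt Bf (deriv Bf s) s :=
    fun s => (hBC.differentiable hle s).hasDerivAt
  have dκ : ∀ s, HasDerivAt κf (deriv κf s) s :=
    fun s => (hκC.differentiable hle s).hasDerivAt
  have dκ' : ∀ s, HasDerivAt (deriv κf) (deriv (deriv κf) s) s :=
    fun s => (hκ'C.differentiable hle s).hasDerivAt
  have dτ : ∀ s, HasDerivAt τf (deriv τf s) s :=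
    fun s => (hτC.differentiable hle s).hasDerivAt
  -- basic identities
  have hTs : ∀ s, deriv Tf s = κf s • Nf s := by
    intro s
    rw [hNf s, smul_smul, mul_inv_cancel₀ (hκne s), one_smul]
  have hTT : ∀ s, (inner ℝ (Tf s) (Tf s) : ℝ) = 1 := by
    intro s; rw [real_inner_self_eq_norm_sq, hUnit s]; norm_num
  have hNN : ∀ s, (inner ℝ (Nf s) (Nf s) : ℝ) = 1 := by
    intro s
    rw [real_inner_self_eq_norm_sq, hNf s, norm_smul]
    rw [Real.norm_eq_abs, abs_of_pos (inv_pos.mpr (hκpos s)), ← hκf s,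
      inv_mul_cancel₀ (hκne s)]
    norm_num
  -- derivative of a constant inner product
  have dinner0 : ∀ (u v : ℝ → E3), (∀ s, HasDerivAt u (deriv u s) s) →
      (∀ s, HasDerivAt v (deriv v s) s) → (∀ s, (inner ℝ (u s) (v s) : ℝ) = (inner ℝ (u 0) (v 0) : ℝ)) →
      ∀ s, (inner ℝ (u s) (deriv v s) : ℝ) + (inner ℝ (deriv u s) (v s) : ℝ) = 0 := by
    intro u v hu hv hc s
    have h1 : HasDerivAt (fun s => (inner ℝ (u s) (v s) : ℝ))
        ((inner ℝ (u s) (deriv v s) : ℝ) + (inner ℝ (deriv u s) (v s) : ℝ)) s :=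
      HasDerivAt.inner ℝ (hu s) (hv s)
    have h2 : HasDerivAt (fun s => (inner ℝ (u s) (v s) : ℝ)) 0 s := by
      have : (fun s => (inner ℝ (u s) (v s) : ℝ)) = fun _ => (inner ℝ (u 0) (v 0) : ℝ) :=
        funext hc
      rw [this]; exact hasDerivAt_const s _
    exact h1.unique h2
  -- ⟪T,N⟫ = 0
  have hTN : ∀ s, (inner ℝ (Tf s) (Nf s) : ℝ) = 0 := by
    intro s
    have h := dinner0 Tf Tf dT dT (fun s => by rw [hTT s, hTT 0]) s
    rw [real_inner_comm (Tf s) (deriv Tf s)] at h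
    have h2 : (inner ℝ (Tf s) (deriv Tf s) : ℝ) = 0 := by linarith
    rw [hTs s, real_inner_smul_right] at h2
    exact (mul_eq_zero.mp h2).resolve_left (hκne s)
  have hBT : ∀ s, (inner ℝ (Bf s) (Tf s) : ℝ) = 0 := by
    intro s; rw [hBf s]; exact cross3_inner_left _ _
  have hBN : ∀ s, (inner ℝ (Bf s) (Nf s) : ℝ) = 0 := by
    intro s; rw [hBf s]; exact cross3_inner_right _ _
  have hBB : ∀ s, (inner ℝ (Bf s) (Bf s) : ℝ) = 1 := by
    intro s; rw [hBf s, cross3_inner_self, hTT s, hNN s, hTN s]; ring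
  -- Frenet: N' = -κ T + τ B
  have hNs : deriv Nf s₀ = (-(κf s₀)) • Tf s₀ + τf s₀ • Bf s₀ := by
    have hc := complete3 (Tf s₀) (Nf s₀) (hTT s₀) (hNN s₀) (hTN s₀) (deriv Nf s₀)
    rw [← hBf s₀] at hc
    have c1 : (inner ℝ (deriv Nf s₀) (Tf s₀) : ℝ) = -(κf s₀) := by
      have h := dinner0 Nf Tf dN dT (fun s => by
        rw [real_inner_comm, hTN s, real_inner_comm, hTN 0]) s₀
      rw [hTs s₀, real_inner_smul_right, hNN s₀] at h
      linarith
    have c2 : (inner ℝ (deriv Nf s₀) (Nf s₀) : ℝ) = 0 := by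
      have h := dinner0 Nf Nf dN dN (fun s => by rw [hNN s, hNN 0]) s₀
      rw [real_inner_comm (deriv Nf s₀) (Nf s₀)] at h
      linarith
    have c3 : (inner ℝ (deriv Nf s₀) (Bf s₀) : ℝ) = τf s₀ := by
      have h := dinner0 Nf Bf dN dB (fun s => by
        rw [real_inner_comm, hBN s, real_inner_comm, hBN 0]) s₀
      rw [real_inner_comm (deriv Bf s₀) (Nf s₀)] at h
      have := hτf s₀
      linarith
    rw [c1, c2, c3] at hc
    rw [hc]; module
  -- Frenet: B' = -τ N
  have hBs : deriv Bf s₀ = (-(τf s₀)) • Nf s₀ := by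
    have hc := complete3 (Tf s₀) (Nf s₀) (hTT s₀) (hNN s₀) (hTN s₀) (deriv Bf s₀)
    rw [← hBf s₀] at hc
    have c1 : (inner ℝ (deriv Bf s₀) (Tf s₀) : ℝ) = 0 := by
      have h := dinner0 Bf Tf dB dT (fun s => by rw [hBT s, hBT 0]) s₀
      rw [hTs s₀, real_inner_smul_right, hBN s₀] at h
      linarith
    have c2 : (inner ℝ (deriv Bf s₀) (Nf s₀) : ℝ) = -(τf s₀) := by
      have := hτf s₀; linarith
    have c3 : (inner ℝ (deriv Bf s₀) (Bf s₀) : ℝ) = 0 := by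
      have h := dinner0 Bf Bf dB dB (fun s => by rw [hBB s, hBB 0]) s₀
      rw [real_inner_comm (deriv Bf s₀) (Bf s₀)] at h
      linarith
    rw [c1, c2, c3] at hc
    rw [hc]; module
  -- the final computation
  have h1 : HasDerivAt (fun s => ((1/2) * (κf s)^2) • Tf s)
      (((1/2) * (κf s₀)^2) • deriv Tf s₀
        + ((1/2) * (2 * κf s₀ ^ 1 * deriv κf s₀)) • Tf s₀) s₀ :=
    HasDerivAt.smul (((dκ s₀).pow 2).const_mul (1/2)) (dT s₀)
  have h2 : HasDerivAt (fun s => (deriv κf s) • Nf s)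
      ((deriv κf s₀) • deriv Nf s₀ + (deriv (deriv κf) s₀) • Nf s₀) s₀ :=
    HasDerivAt.smul (dκ' s₀) (dN s₀)
  have h3 : HasDerivAt (fun s => (κf s * τf s) • Bf s)
      ((κf s₀ * τf s₀) • deriv Bf s₀
        + (deriv κf s₀ * τf s₀ + κf s₀ * deriv τf s₀) • Bf s₀) s₀ :=
    HasDerivAt.smul ((dκ s₀).mul (dτ s₀)) (dB s₀)
  have hsum : HasDerivAt (fun s => ((1/2) * (κf s)^2) • Tf s + (deriv κf s) • Nf s
      + (κf s * τf s) • Bf s) _ s₀ := (h1.add h2).add h3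
  rw [hsum.deriv, hTs s₀, hNs, hBs]
  match_scalars <;> ring


/-- **Tangent evolution under the helicity-driven LIA filament equation.**
If a smooth family of arclength-parametrized space curves with
nowhere-vanishing curvature satisfies `∂ₜX = (1/2)κ² t + κₛ n + κτ b`, then
the unit tangent evolves by
`∂ₜt = (κₛₛ − κτ² + (1/2)κ³) n + (2κₛτ + κτₛ) b`. -/
theorem tangent_evolution_helicity_LIA
    (X T N B : ℝ → ℝ → E3) (κ τ : ℝ → ℝ → ℝ)
    (hX : ContDiff ℝ (⊤ : ℕ∞) (fun p : ℝ × ℝ => X p.1 p.2))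
    (hT : ∀ s t, T s t = deriv (fun s' => X s' t) s)
    (hUnit : ∀ s t, ‖T s t‖ = 1)
    (hκ : ∀ s t, κ s t = ‖deriv (fun s' => T s' t) s‖)
    (hκpos : ∀ s t, 0 < κ s t)
    (hN : ∀ s t, N s t = (κ s t)⁻¹ • deriv (fun s' => T s' t) s)
    (hB : ∀ s t, B s t = cross3 (T s t) (N s t))
    (hτ : ∀ s t, τ s t = -(inner ℝ (deriv (fun s' => B s' t) s) (N s t) : ℝ))
    (hPDE : ∀ s t, deriv (fun t' => X s t') t =
      ((1/2) * (κ s t)^2) • T s t + (deriv (fun s' => κ s' t) s) • N s t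
        + (κ s t * τ s t) • B s t) :
    ∀ s t, deriv (fun t' => T s t') t =
      (deriv (fun s' => deriv (fun s'' => κ s'' t) s') s
          - κ s t * (τ s t)^2 + (1/2) * (κ s t)^3) • N s t
        + (2 * deriv (fun s' => κ s' t) s * τ s t
            + κ s t * deriv (fun s' => τ s' t) s) • B s t := by
  intro s₀ t
  have hF : ContDiff ℝ ∞ (fun p : ℝ × ℝ => X p.1 p.2) := hX.of_le (by simp)
  have hd : Differentiable ℝ (fun p : ℝ × ℝ => X p.1 p.2) :=
    hF.differentiable (by simp)
  have hf : ContDiff ℝ ∞ (fun s' => X s' t) := by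
    have : (fun s' => X s' t)
        = (fun p : ℝ × ℝ => X p.1 p.2) ∘ (fun s' : ℝ => (s', t)) := rfl
    rw [this]
    exact hF.comp (contDiff_id.prodMk contDiff_const)
  have e1 : deriv (fun t' => T s₀ t') t
      = deriv (fun s' => deriv (fun t' => X s' t') t) s₀ := by
    have h : (fun t' => T s₀ t') = fun t' => deriv (fun s' => X s' t') s₀ :=
      funext fun t' => hT s₀ t'
    rw [h]
    exact mixed_symm (fun p : ℝ × ℝ => X p.1 p.2) hF s₀ t
  have e2 : deriv (fun s' => deriv (fun t' => X s' t') t) s₀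
      = deriv (fun s' => ((1/2) * (κ s' t)^2) • T s' t
          + (deriv (fun s'' => κ s'' t) s') • N s' t
          + (κ s' t * τ s' t) • B s' t) s₀ := by
    congr 1
    funext s'
    exact hPDE s' t
  rw [e1, e2]
  exact key (fun s' => X s' t) (fun s' => T s' t) (fun s' => N s' t)
    (fun s' => B s' t) (fun s' => κ s' t) (fun s' => τ s' t) s₀ hf
    (funext fun s => hT s t) (fun s => hUnit s t) (fun s => hκ s t)
    (fun s => hκpos s t) (fun s => hN s t) (fun s => hB s t) (fun s => hτ s t)
end
end
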